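/- arXiv:math-ph/0410020 — 3 statements merged into one kernel-verified Lean document; each statement's English description precedes it below -/
import Mathlib

section
/- Let A be a unital C*-algebra with an involutive grading Θ, let I be an index set equipped with a partial order ≤, a symmetric orthogonality relation ⊥ satisfying (α ≤ β and β ⊥ γ imply α ⊥ γ), a complementation map c : I → I with αᶜ ⊥ α and (β ⊥ α implies β ≤ αᶜ), and let F_loc ⊆ I be closed under a binary join ⊔ with α ≤ α ⊔ β and β ≤ α ⊔ β. Let (A_α)_{α ∈ I} be a family of closed Θ-invariant star-subalgebras of A such that: (L1) for every δ ∈ I the union of the A_γ over γ ∈ F_loc with γ ≤ δ is norm-dense in A_δ; (L2) γ ≤ δ implies A_γ ⊆ A_δ; (L4) whenever α ⊥ β, xy = yx whenever x ∈ A_α, y ∈ A_β and at least one of x, y is even, and xy = −yx whenever x ∈ A_α, y ∈ A_β are both odd. Let ω be a state on A satisfying the cluster property with respect to this quasi-local structure: for every ε > 0 and every a ∈ A there exists α ∈ F_loc such that |ω(ab) − ω(a)ω(b)| ≤ ε‖b‖ for every β ∈ I with β ⊥ α and every b ∈ A_β. Then it is not the case that for every γ ∈ F_loc one has sup{ |ω(b)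 − ω(Θ(b))| : b ∈ A_{γᶜ}, ‖b‖ ≤ 1 } = 2; that is, there exists γ ∈ F_loc such that the restrictions of ω and ω∘Θ to A_{γᶜ} have norm distance strictly less than 2, so ω and ω∘Θ cannot be disjoint with respect to the quasi-local structure. -/
/-- Absence of spontaneous breaking of fermion grading symmetry.
Let `A` be a unital C*-algebra with an involutive grading `Θ`, and
`(Aα α)_{α ∈ ι}` a quasi-local structure over an index set `ι` with partial order
`≤`, symmetric orthogonality `perp` (compatible with `≤`), complementation
`compl`, and a set `F` of local indices closed under a binary join; assume the
density condition (L1), monotonicity (L2), `Θ`-invariance of the `Aα α` (L3), and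
graded commutation relations (L4). If a state `ω` satisfies the cluster property
with respect to this quasi-local structure, then it is NOT the case that for every
`γ ∈ F` the restrictions of `ω` and `ω∘Θ` to `Aα (compl γ)` are at norm distance
`2`, i.e. `ω` and `ω∘Θ` cannot be disjoint with respect to the quasi-local
structure. -/
theorem fermion_grading_not_macroscopically_broken
    {A : Type*} [NormedRing A] [StarRing A] [CStarRing A]
    [NormedAlgebra ℂ A] [StarModule ℂ A] [CompleteSpace A]
    (Θ : A ≃⋆ₐ[ℂ] A) (hΘinv : ∀ a : A, Θ (Θ a) = a)
    {ι : Type*} [PartialOrder ι]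
    (perp : ι → ι → Prop)
    (hperpSymm : ∀ α β, perp α β → perp β α)
    (hperpMono : ∀ α β γ, α ≤ β → perp β γ → perp α γ)
    (compl : ι → ι)
    (hcompl : ∀ α, perp (compl α) α)
    (hcomplMax : ∀ α β, perp β α → β ≤ compl α)
    (F : Set ι) (join : ι → ι → ι)
    (hFjoin : ∀ α ∈ F, ∀ β ∈ F, join α β ∈ F)
    (hjoinLeft : ∀ α β, α ≤ join α β)
    (hjoinRight : ∀ α β, β ≤ join α β)
    (Aα : ι → StarSubalgebra ℂ A)
    (hAclosed : ∀ α, IsClosed (Aα α : Set A))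
    (hL3 : ∀ α, ∀ a ∈ Aα α, Θ a ∈ Aα α)
    (hL1 : ∀ δ, (Aα δ : Set A) ⊆ closure {a : A | ∃ γ ∈ F, γ ≤ δ ∧ a ∈ Aα γ})
    (hL2 : ∀ γ δ : ι, γ ≤ δ → (Aα γ : Set A) ⊆ (Aα δ : Set A))
    (hL4comm : ∀ α β, perp α β → ∀ x ∈ Aα α, ∀ y ∈ Aα β,
      (Θ x = x ∨ Θ y = y) → x * y = y * x)
    (hL4anti : ∀ α β, perp α β → ∀ x ∈ Aα α, ∀ y ∈ Aα β,
      Θ x = -x → Θ y = -y → x * y = -(y * x))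
    (ω : A →L[ℂ] ℂ) (hω1 : ω 1 = 1)
    (hωpos : ∀ a : A, ∃ r : ℝ, 0 ≤ r ∧ ω (star a * a) = r)
    (hcluster : ∀ ε > (0 : ℝ), ∀ a : A, ∃ α ∈ F, ∀ β, perp β α →
      ∀ b ∈ Aα β, ‖ω (a * b) - ω a * ω b‖ ≤ ε * ‖b‖) :
    ¬ (∀ γ ∈ F,
        sSup {r : ℝ | ∃ b ∈ Aα (compl γ), ‖b‖ ≤ 1 ∧ r = ‖ω b - ω (Θ b)‖} = 2) := by
  letI : CStarAlgebra A := ⟨⟩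
  intro H
  -- Θ is isometric
  have hΘnorm : ∀ a : A, ‖Θ a‖ = ‖a‖ := fun a => StarAlgEquiv.norm_map Θ a
  -- imaginary parts of positive values vanish
  have himz : ∀ a : A, (ω (star a * a)).im = 0 := by
    intro a
    obtain ⟨r, -, hr⟩ := hωpos a
    rw [hr]
    exact Complex.ofReal_im r
  -- ω is hermitian
  have hherm : ∀ a : A, ω (star a) = (starRingEnd ℂ) (ω a) := by
    intro a
    have h1 := himz (a + 1)
    have h2 := himz (a + Complex.I • (1 : A))
    have e1 : star (a + 1) * (a + 1) = star a * a + (star a + a) + 1 := by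
      simp only [star_add, star_one]
      noncomm_ring
    have e2 : star (a + Complex.I • (1 : A)) * (a + Complex.I • (1 : A))
        = star a * a + (Complex.I • star a - Complex.I • a) + 1 := by
      simp only [star_add, star_smul, star_one, Complex.star_def, Complex.conj_I]
      rw [mul_add, add_mul, add_mul, mul_smul_comm, mul_one, smul_mul_assoc, one_mul,
        smul_mul_assoc, mul_smul_comm, smul_smul]
      rw [neg_mul, Complex.I_mul_I, neg_neg, one_smul, one_mul, neg_smul]
      abel
    rw [e1] at h1
    rw [e2] at h2
    simp only [map_add, map_sub, map_smul, hω1, smul_eq_mul, Complex.add_im, Complex.sub_im,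
      Complex.mul_im, Complex.I_re, Complex.I_im, Complex.one_im, himz a] at h1 h2
    apply Complex.ext
    · simp only [Complex.conj_re]; linarith
    · simp only [Complex.conj_im]; linarith
  -- extraction of nearly-norm-one odd local expectation witnesses
  have hex : ∀ γ ∈ F, ∃ b ∈ Aα (compl γ), ‖b‖ ≤ 1 ∧ Θ b = -b ∧ 7/8 < ‖ω b‖ := by
    intro γ hγ
    have hs := H γ hγ
    have hne : {r : ℝ | ∃ b ∈ Aα (compl γ), ‖b‖ ≤ 1 ∧ r = ‖ω b - ω (Θ b)‖}.Nonempty := by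
      refine ⟨0, 0, (Aα (compl γ)).zero_mem, by simp⟩
    have hlt : (2 - 1/4 : ℝ) < sSup {r : ℝ | ∃ b ∈ Aα (compl γ), ‖b‖ ≤ 1 ∧ r = ‖ω b - ω (Θ b)‖} := by
      rw [hs]; norm_num
    obtain ⟨r, ⟨b, hbmem, hbnorm, hbr⟩, hrlt⟩ := exists_lt_of_lt_csSup hne hlt
    refine ⟨(2:ℂ)⁻¹ • (b - Θ b), ?_, ?_, ?_, ?_⟩
    · exact (Aα (compl γ)).smul_mem (sub_mem hbmem (hL3 _ b hbmem)) _
    · have : ‖(2:ℂ)⁻¹ • (b - Θ b)‖ = (1/2) * ‖b - Θ b‖ := by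
        rw [norm_smul]
        norm_num
      rw [this]
      have := norm_sub_le b (Θ b)
      rw [hΘnorm] at this
      linarith
    · rw [map_smul, map_sub, hΘinv]
      rw [smul_sub, smul_sub]
      abel
    · have : ω ((2:ℂ)⁻¹ • (b - Θ b)) = (2:ℂ)⁻¹ * (ω b - ω (Θ b)) := by
        rw [map_smul, map_sub, smul_eq_mul]
      rw [this, norm_mul]
      have h2 : ‖(2:ℂ)⁻¹‖ = 1/2 := by
        rw [norm_inv]
        norm_num
      rw [h2, ← hbr]
      linarith
  -- get some element of F
  obtain ⟨α₀, hα₀F, -⟩ := hcluster 1 one_pos 1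
  obtain ⟨b₁, hb₁mem, hb₁norm, hb₁odd, hb₁ω⟩ := hex α₀ hα₀F
  -- approximate b₁ by a local odd element
  set δ₀ : ℝ := 1 / (8 * (‖ω‖ + 1)) with hδ₀
  have hδ₀pos : 0 < δ₀ := by positivity
  have hb₁cl := hL1 (compl α₀) hb₁mem
  rw [Metric.mem_closure_iff] at hb₁cl
  obtain ⟨c, ⟨γ₁, hγ₁F, -, hcmem⟩, hcd⟩ := hb₁cl δ₀ hδ₀pos
  rw [dist_eq_norm] at hcd
  set b₁' : A := (2:ℂ)⁻¹ • (c - Θ c) with hb₁'def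
  have hb₁'mem : b₁' ∈ Aα γ₁ := (Aα γ₁).smul_mem (sub_mem hcmem (hL3 _ c hcmem)) _
  have hb₁'odd : Θ b₁' = -b₁' := by
    rw [hb₁'def, map_smul, map_sub, hΘinv, smul_sub, smul_sub]
    abel
  have hclose : ‖b₁' - b₁‖ < δ₀ := by
    have heq : b₁' - b₁ = (2:ℂ)⁻¹ • ((c - b₁) - Θ (c - b₁)) := by
      rw [map_sub, hb₁odd, hb₁'def]
      module
    rw [heq]
    have h2 : ‖(2:ℂ)⁻¹ • ((c - b₁) - Θ (c - b₁))‖ = (1/2) * ‖(c - b₁) - Θ (c - b₁)‖ := by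
      rw [norm_smul, norm_inv]
      norm_num
    rw [h2]
    have h3 := norm_sub_le (c - b₁) (Θ (c - b₁))
    rw [hΘnorm] at h3
    have h4 : ‖c - b₁‖ < δ₀ := by rwa [norm_sub_rev]
    linarith
  have hωδ : ‖ω‖ * δ₀ < 1/8 := by
    rw [hδ₀]
    rw [div_eq_mul_inv, one_mul, mul_inv_lt_iff₀ (by positivity)]
    nlinarith [norm_nonneg (ω : A →L[ℂ] ℂ)]
  have hb₁'ω : 3/4 < ‖ω b₁'‖ := by
    have h5 : ‖ω b₁' - ω b₁‖ ≤ ‖ω‖ * δ₀ := by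
      rw [← map_sub]
      calc ‖ω (b₁' - b₁)‖ ≤ ‖ω‖ * ‖b₁' - b₁‖ := ω.le_opNorm _
        _ ≤ ‖ω‖ * δ₀ := by
            exact mul_le_mul_of_nonneg_left hclose.le (norm_nonneg _)
    have h6 : ‖ω b₁‖ - ‖ω b₁'‖ ≤ ‖ω b₁' - ω b₁‖ := by
      rw [norm_sub_rev]
      exact norm_sub_norm_le _ _
    linarith
  -- cluster estimates
  obtain ⟨α₂, hα₂F, hcl₂⟩ := hcluster (1/4) (by norm_num) b₁'
  obtain ⟨α₃, hα₃F, hcl₃⟩ := hcluster (1/4) (by norm_num) (star b₁')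
  set γ₂ := join γ₁ (join α₂ α₃) with hγ₂def
  have hγ₂F : γ₂ ∈ F := hFjoin γ₁ hγ₁F _ (hFjoin α₂ hα₂F α₃ hα₃F)
  obtain ⟨b₂, hb₂mem, hb₂norm, hb₂odd, hb₂ω⟩ := hex γ₂ hγ₂F
  -- orthogonality facts
  have hp : perp γ₂ (compl γ₂) := hperpSymm _ _ (hcompl γ₂)
  have hpγ₁ : perp γ₁ (compl γ₂) := hperpMono _ _ _ (hjoinLeft _ _) hp
  have hpα₂ : perp (compl γ₂) α₂ :=
    hperpSymm _ _ (hperpMono _ _ _ (le_trans (hjoinLeft α₂ α₃) (hjoinRight γ₁ _)) hp)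
  have hpα₃ : perp (compl γ₂) α₃ :=
    hperpSymm _ _ (hperpMono _ _ _ (le_trans (hjoinRight α₂ α₃) (hjoinRight γ₁ _)) hp)
  -- the two cluster estimates
  have E1 : ‖ω (b₁' * b₂) - ω b₁' * ω b₂‖ ≤ 1/4 := by
    have := hcl₂ (compl γ₂) hpα₂ b₂ hb₂mem
    calc ‖ω (b₁' * b₂) - ω b₁' * ω b₂‖ ≤ (1/4) * ‖b₂‖ := this
      _ ≤ 1/4 := by nlinarith
  have E2 : ‖ω (b₂ * b₁') - ω b₁' * ω b₂‖ ≤ 1/4 := by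
    have h := hcl₃ (compl γ₂) hpα₃ (star b₂) (star_mem hb₂mem)
    rw [← star_mul] at h
    simp only [hherm] at h
    rw [← RingHom.map_mul, ← RingHom.map_sub, RCLike.norm_conj, norm_star] at h
    linarith [norm_nonneg b₂]
  -- anticommutation
  have hanti : b₁' * b₂ = -(b₂ * b₁') :=
    hL4anti γ₁ (compl γ₂) hpγ₁ b₁' hb₁'mem b₂ hb₂mem hb₁'odd hb₂odd
  have E1' : ‖ω (b₂ * b₁') + ω b₁' * ω b₂‖ ≤ 1/4 := by
    have : ω (b₁' * b₂) = -(ω (b₂ * b₁')) := by rw [hanti, map_neg]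
    rw [this] at E1
    calc ‖ω (b₂ * b₁') + ω b₁' * ω b₂‖ = ‖-(ω (b₂ * b₁')) - ω b₁' * ω b₂‖ := by
          rw [← norm_neg]; congr 1; ring
      _ ≤ 1/4 := E1
  -- contradiction
  have hz : ‖ω b₁' * ω b₂‖ ≤ 1/4 := by
    have h := norm_sub_le (ω (b₂ * b₁') + ω b₁' * ω b₂) (ω (b₂ * b₁') - ω b₁' * ω b₂)
    have heq : (ω (b₂ * b₁') + ω b₁' * ω b₂) - (ω (b₂ * b₁') - ω b₁' * ω b₂)
        = 2 * (ω b₁' * ω b₂) := by ring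
    rw [heq] at h
    have h2 : ‖(2 : ℂ) * (ω b₁' * ω b₂)‖ = 2 * ‖ω b₁' * ω b₂‖ := by
      rw [norm_mul]; norm_num
    rw [h2] at h
    linarith [add_le_add E1' E2]
  rw [norm_mul] at hz
  nlinarith
end

section
/- Let A be a unital C*-algebra with an involutive grading Θ, let ω be a state on A, and let B ⊆ A be a closed Θ-invariant star-subalgebra such that sup{ |ω(b) − ω(Θ(b))| : b ∈ B, ‖b‖ ≤ 1 } = 2. Then for every ε > 0 there exists a self-adjoint odd element a ∈ B (a⋆ = a, Θ(a) = −a) with ‖a‖ ≤ 1 and ω(a) > (1 − ε)/√2. -/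
/-!
Pick `b` in the unit ball of `B` with `‖ω b - ω (Θ b)‖ > 2 - ε` and multiply it by a phase so that
`ω b - ω (Θ b)` becomes a positive real. The odd part `(b - Θ b) / 2` then has `ω`-value
`‖ω b - ω (Θ b)‖ / 2 > 1 - ε / 2`, and so has its real part, because a state takes real values on
self-adjoint elements. Taking real and odd parts commutes with `Θ` and does not increase the norm.
-/

open scoped ComplexStarModule

section Hermitian

variable {A F : Type*} [FunLike F A ℂ]

/-- Polarization: `star (1 + x) * (1 + x) = 1 + 2 x + star x * x` for self-adjoint `x`. -/
theorem im_apply_eq_zero_of_isSelfAdjoint [Ring A] [StarRing A] [Algebra ℂ A]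
    [LinearMapClass F ℂ A ℂ] (ω : F) (hω : ∀ a : A, (ω (star a * a)).im = 0) {x : A}
    (hx : IsSelfAdjoint x) : (ω x).im = 0 := by
  have hexpand : star (1 + x) * (1 + x) = star 1 * 1 + (x + x) + star x * x := by
    rw [star_add, star_one, hx.star_eq]; noncomm_ring
  have h := hω (1 + x)
  rw [hexpand, map_add, map_add, map_add, Complex.add_im, Complex.add_im, Complex.add_im,
    hω 1, hω x] at h
  linarith

theorem re_apply_realPart [AddCommGroup A] [Module ℂ A] [StarAddMonoid A] [StarModule ℂ A]
    [LinearMapClass F ℂ A ℂ] (ω : F) (hω : ∀ x : A, IsSelfAdjoint x → (ω x).im = 0) (a : A) :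
    (ω (ℜ a)).re = (ω a).re := by
  conv_rhs => rw [← realPart_add_I_smul_imaginaryPart a]
  simp [hω _ (ℑ a).2]

end Hermitian

section OddPart

variable {A : Type*} [Ring A] [StarRing A] [Algebra ℂ A]

noncomputable def oddPart (Θ : A ≃⋆ₐ[ℂ] A) (b : A) : A := (2 : ℂ)⁻¹ • (b - Θ b)

theorem oddPart_mem [StarModule ℂ A] {Θ : A ≃⋆ₐ[ℂ] A} {B : StarSubalgebra ℂ A}
    (hB : ∀ b ∈ B, Θ b ∈ B) {b : A} (hb : b ∈ B) : oddPart Θ b ∈ B :=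
  B.smul_mem (B.sub_mem hb (hB b hb)) _

theorem map_oddPart {Θ : A ≃⋆ₐ[ℂ] A} (hΘ : ∀ a, Θ (Θ a) = a) (b : A) :
    Θ (oddPart Θ b) = -oddPart Θ b := by
  rw [oddPart, map_smul, map_sub, hΘ, ← smul_neg, neg_sub]

theorem apply_oddPart {F : Type*} [FunLike F A ℂ] [LinearMapClass F ℂ A ℂ] (ω : F)
    (Θ : A ≃⋆ₐ[ℂ] A) (b : A) : ω (oddPart Θ b) = (ω b - ω (Θ b)) / 2 := by
  rw [oddPart, map_smul, map_sub, smul_eq_mul]; ring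

end OddPart

theorem norm_oddPart_le {A : Type*} [CStarAlgebra A] (Θ : A ≃⋆ₐ[ℂ] A) (b : A) :
    ‖oddPart Θ b‖ ≤ ‖b‖ :=
  calc ‖oddPart Θ b‖ ≤ 2⁻¹ * (‖b‖ + ‖Θ b‖) := by
        rw [oddPart, norm_smul, norm_inv, Complex.norm_two]; gcongr; exact norm_sub_le _ _
    _ = ‖b‖ := by rw [StarAlgEquiv.norm_map]; ring

theorem exists_selfAdjoint_odd_re_apply_eq {A F : Type*} [CStarAlgebra A] [FunLike F A ℂ]
    [LinearMapClass F ℂ A ℂ] (ω : F) (hω : ∀ x : A, IsSelfAdjoint x → (ω x).im = 0)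
    {Θ : A ≃⋆ₐ[ℂ] A} (hΘ : ∀ a, Θ (Θ a) = a) {B : StarSubalgebra ℂ A}
    (hB : ∀ b ∈ B, Θ b ∈ B) {b : A} (hb : b ∈ B) :
    ∃ a ∈ B, IsSelfAdjoint a ∧ Θ a = -a ∧ ‖a‖ ≤ ‖b‖ ∧ (ω a).re = ‖ω b - ω (Θ b)‖ / 2 := by
  obtain ⟨u, hu_norm, hu⟩ := Complex.exists_norm_eq_mul_self (ω b - ω (Θ b))
  set c := oddPart Θ (u • b)
  have hc : c ∈ B := oddPart_mem hB (B.smul_mem hb u)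
  refine ⟨ℜ c, ?_, (ℜ c).2, ?_, ?_, ?_⟩
  · rw [realPart_apply_coe, ← Complex.coe_smul]
    exact SMulMemClass.smul_mem _ (add_mem hc (star_mem hc))
  · rw [map_realPart, map_oddPart hΘ, map_neg, NegMemClass.coe_neg]
  · calc ‖(ℜ c : A)‖ ≤ ‖c‖ := realPart.norm_le c
      _ ≤ ‖u • b‖ := norm_oddPart_le Θ _
      _ = ‖b‖ := by rw [norm_smul, hu_norm, one_mul]
  · simp only [re_apply_realPart ω hω, c, apply_oddPart, map_smul, smul_eq_mul]
    rw [← mul_sub, ← hu]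
    simp

theorem one_sub_div_sqrt_two_lt_one_sub_div_two {ε : ℝ} (hε : 0 < ε) :
    (1 - ε) / Real.sqrt 2 < 1 - ε / 2 := by
  have h2 : Real.sqrt 2 * Real.sqrt 2 = 2 := Real.mul_self_sqrt zero_le_two
  have h1 : 1 < Real.sqrt 2 := by
    rw [Real.lt_sqrt zero_le_one]; norm_num
  rw [div_lt_iff₀ (by positivity)]
  nlinarith

theorem exists_selfAdjoint_odd_large_expectation_general
    {A : Type*} [NormedRing A] [StarRing A] [CStarRing A]
    [NormedAlgebra ℂ A] [StarModule ℂ A] [CompleteSpace A]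
    (Θ : A ≃⋆ₐ[ℂ] A) (hΘinv : ∀ a : A, Θ (Θ a) = a)
    (ω : A →L[ℂ] ℂ)
    (hωpos : ∀ a : A, ∃ r : ℝ, 0 ≤ r ∧ ω (star a * a) = r)
    (B : StarSubalgebra ℂ A)
    (hBinv : ∀ b ∈ B, Θ b ∈ B)
    (hsup : sSup {r : ℝ | ∃ b ∈ B, ‖b‖ ≤ 1 ∧ r = ‖ω b - ω (Θ b)‖} = 2) :
    ∀ ε > (0 : ℝ), ∃ a ∈ B, star a = a ∧ Θ a = -a ∧ ‖a‖ ≤ 1 ∧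
      (1 - ε) / Real.sqrt 2 < (ω a).re := by
  let _ : CStarAlgebra A := { ‹NormedRing A›, ‹StarRing A›, ‹CStarRing A›, ‹NormedAlgebra ℂ A›,
    ‹StarModule ℂ A›, ‹CompleteSpace A› with }
  have hω : ∀ x : A, IsSelfAdjoint x → (ω x).im = 0 :=
    fun _ ↦ im_apply_eq_zero_of_isSelfAdjoint ω fun a ↦ by
      obtain ⟨r, -, hr⟩ := hωpos a
      rw [hr, Complex.ofReal_im]
  intro ε hε
  have hlt : 2 - ε < sSup {r : ℝ | ∃ b ∈ B, ‖b‖ ≤ 1 ∧ r = ‖ω b - ω (Θ b)‖} := by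
    rw [hsup]; linarith
  obtain ⟨_, ⟨b, hbB, hb_norm, rfl⟩, hb⟩ :=
    exists_lt_of_lt_csSup (by exact ⟨0, 0, B.zero_mem, by simp⟩) hlt
  obtain ⟨a, haB, ha_sa, ha_odd, ha_norm, ha⟩ :=
    exists_selfAdjoint_odd_re_apply_eq ω hω hΘinv hBinv hbB
  refine ⟨a, haB, ha_sa.star_eq, ha_odd, ha_norm.trans hb_norm, ?_⟩
  have := one_sub_div_sqrt_two_lt_one_sub_div_two hε
  rw [ha]; linarith

/-- Let `A` be a unital C*-algebra with an involutive grading `Θ`,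
`ω` a state on `A`, and `B ⊆ A` a closed `Θ`-invariant star-subalgebra with
`sup { |ω(b) − ω(Θ b)| : b ∈ B, ‖b‖ ≤ 1 } = 2`. Then for every `ε > 0` there is a
self-adjoint odd `a ∈ B` with `‖a‖ ≤ 1` and `ω a > (1 − ε)/√2` (the value `ω a`
being real for self-adjoint `a`, this is expressed via the real part). -/
theorem exists_selfAdjoint_odd_large_expectation
    {A : Type*} [NormedRing A] [StarRing A] [CStarRing A]
    [NormedAlgebra ℂ A] [StarModule ℂ A] [CompleteSpace A]
    (Θ : A ≃⋆ₐ[ℂ] A) (hΘinv : ∀ a : A, Θ (Θ a) = a)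
    (ω : A →L[ℂ] ℂ) (hω1 : ω 1 = 1)
    (hωpos : ∀ a : A, ∃ r : ℝ, 0 ≤ r ∧ ω (star a * a) = r)
    (B : StarSubalgebra ℂ A) (hBclosed : IsClosed (B : Set A))
    (hBinv : ∀ b ∈ B, Θ b ∈ B)
    (hsup : sSup {r : ℝ | ∃ b ∈ B, ‖b‖ ≤ 1 ∧ r = ‖ω b - ω (Θ b)‖} = 2) :
    ∀ ε > (0 : ℝ), ∃ a ∈ B, star a = a ∧ Θ a = -a ∧ ‖a‖ ≤ 1 ∧
      (1 - ε) / Real.sqrt 2 < (ω a).re :=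
  exists_selfAdjoint_odd_large_expectation_general Θ hΘinv ω hωpos B hBinv hsup
end

section
/- Let A be a unital C*-algebra with an involutive grading Θ, and let ω be an even state on A, i.e. ω∘Θ = ω. Let N be a Θ-invariant unital star-subalgebra of A, and let v ∈ N satisfy v⋆ = v, v² = 1, Θ(v) = v, and Θ(x) = v x v for all x ∈ N. Let τ be a tracial state on N (τ(xy) = τ(yx) for x, y ∈ N). Assume ω(x·c) = τ(x)·ω(c) for every x ∈ N and every c ∈ A commuting with all elements of N. Let C ⊆ A be a Θ-invariant star-subalgebra such that every even element of C commutes with all elements of N, and for every odd element c ∈ C the element v·c commutes with all elements of N. Then ω(x·c) = τ(x)·ω(c) for every x ∈ N and every c ∈ C; that is, ω is a product of τ on N and its restriction to C. -/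
/-- Let `A` be a unital C*-algebra with involutive grading `Θ` and
`ω` an even state. Let `N` be a `Θ`-invariant unital star-subalgebra, `v ∈ N` a
self-adjoint even symmetry implementing `Θ` on `N`, and `τ` a tracial state on `N`
such that `ω (x·c) = τ(x)·ω(c)` for all `x ∈ N` and all `c` commuting with `N`.
Let `C` be a `Θ`-invariant star-subalgebra such that even elements of `C` commute
with `N` and, for odd `c ∈ C`, `v·c` commutes with `N`. Then
`ω (x·c) = τ(x)·ω(c)` for all `x ∈ N` and `c ∈ C`. -/
theorem even_state_product_extension
    {A : Type*} [NormedRing A] [StarRing A] [CStarRing A]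
    [NormedAlgebra ℂ A] [StarModule ℂ A] [CompleteSpace A]
    (Θ : A ≃⋆ₐ[ℂ] A) (hΘinv : ∀ a : A, Θ (Θ a) = a)
    (ω : A →L[ℂ] ℂ) (hω1 : ω 1 = 1)
    (hωpos : ∀ a : A, ∃ r : ℝ, 0 ≤ r ∧ ω (star a * a) = r)
    (hωeven : ∀ a : A, ω (Θ a) = ω a)
    (N : StarSubalgebra ℂ A) (hNinv : ∀ x ∈ N, Θ x ∈ N)
    (v : A) (hvN : v ∈ N) (hvstar : star v = v) (hv2 : v * v = 1)
    (hvΘ : Θ v = v) (hvimpl : ∀ x ∈ N, Θ x = v * x * v)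
    (τ : ↥N →ₗ[ℂ] ℂ) (hτ1 : τ 1 = 1)
    (hτpos : ∀ x : ↥N, ∃ r : ℝ, 0 ≤ r ∧ τ (star x * x) = r)
    (hτtr : ∀ x y : ↥N, τ (x * y) = τ (y * x))
    (hprod : ∀ x : ↥N, ∀ c ∈ Set.centralizer (N : Set A),
      ω ((x : A) * c) = τ x * ω c)
    (C : StarSubalgebra ℂ A) (hCinv : ∀ c ∈ C, Θ c ∈ C)
    (hCeven : ∀ c ∈ C, Θ c = c → c ∈ Set.centralizer (N : Set A))
    (hCodd : ∀ c ∈ C, Θ c = -c → v * c ∈ Set.centralizer (N : Set A)) :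
    ∀ x : ↥N, ∀ c ∈ C, ω ((x : A) * c) = τ x * ω c := by
  intro x c hc
  set ce : A := (1/2 : ℂ) • (c + Θ c) with hce
  set co : A := (1/2 : ℂ) • (c - Θ c) with hco
  have hsum : ce + co = c := by
    rw [hce, hco, ← smul_add]
    have h2 : c + Θ c + (c - Θ c) = (2:ℂ) • c := by
      rw [two_smul]; abel
    rw [h2, smul_smul]; norm_num
  have hΘce : Θ ce = ce := by
    simp only [hce, map_smul, map_add, hΘinv c, add_comm]
  have hΘco : Θ co = -co := by
    simp only [hco, map_smul, map_sub, hΘinv c, ← smul_neg, neg_sub]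
  have hcoC : co ∈ C := C.smul_mem (C.sub_mem hc (hCinv c hc)) _
  have hωco : ω co = 0 := by
    have h := hωeven co
    rw [hΘco, map_neg] at h
    have : (2:ℂ) * ω co = 0 := by linear_combination -h
    simpa using this
  have hvcoC : v * co ∈ Set.centralizer (N : Set A) := hCodd co hcoC hΘco
  have hωvco : ω (v * co) = 0 := by
    have h := hωeven (v * co)
    rw [map_mul, hvΘ, hΘco, mul_neg, map_neg] at h
    have : (2:ℂ) * ω (v * co) = 0 := by linear_combination -h
    simpa using this
  have hceC : ce ∈ Set.centralizer (N : Set A) :=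
    hCeven ce (C.smul_mem (C.add_mem hc (hCinv c hc)) _) hΘce
  have hxco : ω ((x : A) * co) = 0 := by
    have hxv : (x : A) * v ∈ N := mul_mem x.2 hvN
    have h := hprod ⟨(x : A) * v, hxv⟩ (v * co) hvcoC
    have hrw : ((x : A) * v) * (v * co) = (x : A) * co := by
      rw [show (x : A) * v * (v * co) = (x : A) * (v * v) * co by noncomm_ring, hv2, mul_one]
    rw [hrw] at h
    rw [h, hωvco, mul_zero]
  have hxce : ω ((x : A) * ce) = τ x * ω ce := hprod x ce hceC
  calc ω ((x : A) * c) = ω ((x : A) * ce + (x : A) * co) := by rw [← mul_add, hsum]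
    _ = ω ((x : A) * ce) + ω ((x : A) * co) := map_add ω _ _
    _ = τ x * ω ce := by rw [hxce, hxco, add_zero]
    _ = τ x * ω c := by rw [← hsum, map_add, hωco, add_zero]
end
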